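/- Let (ξ₁, ξ₂) ~ N((πβ, π)', Σ) with Σ fixed positive definite. Then as π → ∞, π·(β̂_U − β) converges in distribution to N(0, σ₁² − 2βσ₁₂ + β²σ₂²), where β̂_U is the unbiased IV estimator. -/

import Mathlib

/-!
Write `t = ξ₂ = π + σ₂ Z₂` and `u = t / σ₂`. The Gaussian tail bounds
`φ(u) (1/u - 1/u³) ≤ 1 - Φ(u) ≤ φ(u) / u` give `t τ̂(t) = 1 + O(t⁻²)`.
Since `ξ₁ - (σ₁₂/σ₂²) ξ₂ = (β - σ₁₂/σ₂²) π + s Z₁` with `s² = σ₁² - σ₁₂²/σ₂²`,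
this makes `π (β̂_U - β)` converge pointwise to `s Z₁ + (σ₁₂/σ₂ - β σ₂) Z₂`,
an `N(0, s² + (σ₁₂/σ₂ - β σ₂)²)` variable, and
`s² + (σ₁₂/σ₂ - β σ₂)² = σ₁² - 2βσ₁₂ + β²σ₂²`. Dominated convergence concludes.
-/

open MeasureTheory ProbabilityTheory Filter

/-- Standard normal density `φ`. -/
noncomputable def stdPDF (x : ℝ) : ℝ :=
  (Real.sqrt (2 * Real.pi))⁻¹ * Real.exp (-(x ^ 2) / 2)

/-- Standard normal CDF `Φ`. -/
noncomputable def stdCDF (x : ℝ) : ℝ := ∫ t in Set.Iic x, stdPDF t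

/-- Mills-ratio estimator `τ̂(x, σ²) = (1/σ)(1 − Φ(x/σ))/φ(x/σ)`. -/
noncomputable def millsTau (σ x : ℝ) : ℝ :=
  (1 / σ) * (1 - stdCDF (x / σ)) / stdPDF (x / σ)

open Topology

lemma stdPDF_eq_gaussianPDFReal : stdPDF = gaussianPDFReal 0 1 := by
  funext x
  simp [stdPDF, gaussianPDFReal]

lemma stdPDF_pos (x : ℝ) : 0 < stdPDF x :=
  stdPDF_eq_gaussianPDFReal ▸ gaussianPDFReal_pos 0 1 x one_ne_zero

lemma integrable_stdPDF : Integrable stdPDF :=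
  stdPDF_eq_gaussianPDFReal ▸ integrable_gaussianPDFReal 0 1

lemma hasDerivAt_stdPDF (x : ℝ) : HasDerivAt stdPDF (-x * stdPDF x) x := by
  have h : HasDerivAt (fun t : ℝ => -(t ^ 2) / 2) (-x) x := by
    refine ((hasDerivAt_pow 2 x).neg.div_const 2).congr_deriv ?_
    ring
  refine (h.exp.const_mul (Real.sqrt (2 * Real.pi))⁻¹).congr_deriv ?_
  rw [stdPDF]
  ring

lemma continuous_stdPDF : Continuous stdPDF :=
  continuous_iff_continuousAt.2 fun x => (hasDerivAt_stdPDF x).continuousAt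

lemma tendsto_stdPDF_atTop : Tendsto stdPDF atTop (𝓝 0) := by
  have h : Tendsto (fun x : ℝ => -(x ^ 2) / 2) atTop atBot :=
    (tendsto_neg_atTop_atBot.comp (tendsto_pow_atTop two_ne_zero)).atBot_div_const two_pos
  have := (Real.tendsto_exp_atBot.comp h).const_mul (Real.sqrt (2 * Real.pi))⁻¹
  rw [mul_zero] at this
  exact this

lemma stdCDF_eq_cdf (x : ℝ) : stdCDF x = cdf (gaussianReal 0 1) x := by
  rw [cdf_eq_real, measureReal_def, gaussianReal_apply_eq_integral _ one_ne_zero,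
    ENNReal.toReal_ofReal (setIntegral_nonneg measurableSet_Iic
      fun t _ => gaussianPDFReal_nonneg 0 1 t), stdCDF, stdPDF_eq_gaussianPDFReal]

lemma tendsto_stdCDF_atTop : Tendsto stdCDF atTop (𝓝 1) := by
  simpa only [← funext stdCDF_eq_cdf] using tendsto_cdf_atTop (gaussianReal 0 1)

lemma hasDerivAt_stdCDF (x : ℝ) : HasDerivAt stdCDF (stdPDF x) x := by
  have h : stdCDF = fun y => stdCDF 0 + ∫ t in (0 : ℝ)..y, stdPDF t := by
    funext y
    rw [stdCDF, stdCDF, ← intervalIntegral.integral_Iic_sub_Iic integrable_stdPDF.integrableOn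
      integrable_stdPDF.integrableOn, add_sub_cancel]
  rw [h]
  exact (intervalIntegral.integral_hasDerivAt_right integrable_stdPDF.intervalIntegrable
    continuous_stdPDF.stronglyMeasurable.stronglyMeasurableAtFilter
    continuous_stdPDF.continuousAt).const_add _

lemma continuous_stdCDF : Continuous stdCDF :=
  continuous_iff_continuousAt.2 fun x => (hasDerivAt_stdCDF x).continuousAt

lemma continuous_millsTau (σ : ℝ) : Continuous (millsTau σ) := by
  unfold millsTau
  exact (continuous_const.mul (continuous_const.sub
    (continuous_stdCDF.comp (continuous_id.div_const σ)))).div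
    (continuous_stdPDF.comp (continuous_id.div_const σ)) fun x => (stdPDF_pos _).ne'

lemma nonneg_of_hasDerivAt_nonpos_of_tendsto_zero {F F' : ℝ → ℝ} {x : ℝ}
    (hF : ∀ t ≥ x, HasDerivAt F (F' t) t) (hF' : ∀ t ≥ x, F' t ≤ 0)
    (hlim : Tendsto F atTop (𝓝 0)) : 0 ≤ F x := by
  have hanti : AntitoneOn F (Set.Ici x) :=
    antitoneOn_of_hasDerivWithinAt_nonpos (convex_Ici x)
      (fun t ht => (hF t ht).continuousAt.continuousWithinAt)
      (fun t ht => (hF t (interior_subset ht)).hasDerivWithinAt)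
      (fun t ht => hF' t (interior_subset ht))
  refine le_of_tendsto hlim ?_
  filter_upwards [eventually_ge_atTop x] with t ht
  exact hanti Set.self_mem_Ici ht ht

lemma one_sub_stdCDF_le {x : ℝ} (hx : 0 < x) : 1 - stdCDF x ≤ stdPDF x / x := by
  suffices 0 ≤ stdPDF x / x - (1 - stdCDF x) by linarith
  refine nonneg_of_hasDerivAt_nonpos_of_tendsto_zero
    (F := fun t => stdPDF t / t - (1 - stdCDF t)) (F' := fun t => -stdPDF t / t ^ 2)
    (fun t ht => ?_) (fun t _ => ?_) ?_
  · have ht : t ≠ 0 := (hx.trans_le ht).ne'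
    refine (((hasDerivAt_stdPDF t).div (hasDerivAt_id t) ht).sub
      ((hasDerivAt_stdCDF t).const_sub 1)).congr_deriv ?_
    simp only [id]
    field_simp
    ring
  · exact div_nonpos_of_nonpos_of_nonneg (neg_nonpos.2 (stdPDF_pos t).le) (sq_nonneg t)
  · simpa using (tendsto_stdPDF_atTop.div_atTop tendsto_id).sub
      (tendsto_stdCDF_atTop.const_sub 1)

lemma stdPDF_div_sub_stdPDF_div_pow_le {x : ℝ} (hx : 0 < x) :
    stdPDF x / x - stdPDF x / x ^ 3 ≤ 1 - stdCDF x := by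
  suffices 0 ≤ (1 - stdCDF x) - (stdPDF x / x - stdPDF x / x ^ 3) by linarith
  refine nonneg_of_hasDerivAt_nonpos_of_tendsto_zero
    (F := fun t => (1 - stdCDF t) - (stdPDF t / t - stdPDF t / t ^ 3))
    (F' := fun t => -3 * stdPDF t / t ^ 4)
    (fun t ht => ?_) (fun t _ => ?_) ?_
  · have ht : t ≠ 0 := (hx.trans_le ht).ne'
    refine (((hasDerivAt_stdCDF t).const_sub 1).sub
      (((hasDerivAt_stdPDF t).div (hasDerivAt_id t) ht).sub
        ((hasDerivAt_stdPDF t).div (hasDerivAt_pow 3 t) (pow_ne_zero 3 ht)))).congr_deriv ?_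
    simp only [id]
    field_simp
    ring
  · have := stdPDF_pos t
    exact div_nonpos_of_nonpos_of_nonneg (by linarith) (by positivity)
  · simpa using (tendsto_stdCDF_atTop.const_sub 1).sub
      ((tendsto_stdPDF_atTop.div_atTop tendsto_id).sub
        (tendsto_stdPDF_atTop.div_atTop (tendsto_pow_atTop three_ne_zero)))

lemma mul_millsTau_mem_Icc {σ x : ℝ} (hσ : 0 < σ) (hx : 0 < x) :
    x * millsTau σ x ∈ Set.Icc (1 - (σ / x) ^ 2) 1 := by
  set u := x / σ
  have hu : 0 < u := div_pos hx hσ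
  have hφ := stdPDF_pos u
  have hτ : x * millsTau σ x = u * (1 - stdCDF u) / stdPDF u := by
    simp only [millsTau, u]
    field_simp
  have hσx : (σ / x) ^ 2 = 1 / u ^ 2 := by
    simp only [u]
    field_simp
  rw [hτ, hσx, Set.mem_Icc, le_div_iff₀ hφ, div_le_iff₀ hφ]
  constructor
  · have h := mul_le_mul_of_nonneg_left (stdPDF_div_sub_stdPDF_div_pow_le hu) hu.le
    calc (1 - 1 / u ^ 2) * stdPDF u = u * (stdPDF u / u - stdPDF u / u ^ 3) := by
          field_simp
      _ ≤ u * (1 - stdCDF u) := h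
  · calc u * (1 - stdCDF u) ≤ u * (stdPDF u / u) :=
          mul_le_mul_of_nonneg_left (one_sub_stdCDF_le hu) hu.le
      _ = 1 * stdPDF u := by field_simp

lemma tendsto_mul_mul_millsTau_sub_one {σ : ℝ} (hσ : 0 < σ) :
    Tendsto (fun x => x * (x * millsTau σ x - 1)) atTop (𝓝 0) := by
  have hlow : Tendsto (fun x : ℝ => -σ ^ 2 * x⁻¹) atTop (𝓝 0) := by
    simpa using tendsto_inv_atTop_zero.const_mul (-σ ^ 2)
  refine tendsto_of_tendsto_of_tendsto_of_le_of_le' hlow tendsto_const_nhds ?_ ?_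
  all_goals filter_upwards [eventually_gt_atTop 0] with x hx
  all_goals have h := mul_millsTau_mem_Icc hσ hx
  · calc -σ ^ 2 * x⁻¹ = x * (1 - (σ / x) ^ 2 - 1) := by field_simp; ring
      _ ≤ x * (x * millsTau σ x - 1) := by gcongr; exact h.1
  · exact mul_nonpos_of_nonneg_of_nonpos hx.le (sub_nonpos.2 h.2)

lemma tendsto_mul_millsTau_add {σ : ℝ} (hσ : 0 < σ) (a k b : ℝ) :
    Tendsto (fun π => π * (millsTau σ (π + a) * (k * π + b) - k)) atTop
      (𝓝 (b - k * a)) := by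
  set g := fun t => t * (t * millsTau σ t - 1)
  have hg : Tendsto g atTop (𝓝 0) := tendsto_mul_mul_millsTau_sub_one hσ
  have hinv : Tendsto (fun t : ℝ => t⁻¹) atTop (𝓝 0) := tendsto_inv_atTop_zero
  have hlim : Tendsto (fun t => (1 - a * t⁻¹) * (k * g t + (b - k * a) * (1 + t⁻¹ * g t)))
      atTop (𝓝 (b - k * a)) := by
    simpa using ((tendsto_const_nhds (x := (1 : ℝ))).sub (hinv.const_mul a)).mul
      ((hg.const_mul k).add (((tendsto_const_nhds (x := (1 : ℝ))).add
        (hinv.mul hg)).const_mul (b - k * a)))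
  -- at `t = π + a` the expression is `(1 - a/t) (k g t + (b - k a) t τ(t))`,
  -- where `t τ(t) = 1 + g t / t`
  have hshift : Tendsto (fun t => (t - a) * (millsTau σ t * (k * (t - a) + b) - k))
      atTop (𝓝 (b - k * a)) := by
    refine hlim.congr' ?_
    filter_upwards [eventually_ne_atTop 0] with t ht
    simp only [g]
    field_simp
    ring
  simpa [Function.comp_def] using hshift.comp (tendsto_atTop_add_const_right atTop a tendsto_id)

lemma tendsto_integral_comp_of_ae_tendsto {Ω E ι : Type*} [MeasurableSpace Ω] {P : Measure Ω}
    [IsFiniteMeasure P] [TopologicalSpace E] [MeasurableSpace E] [OpensMeasurableSpace E]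
    {l : Filter ι} [l.IsCountablyGenerated] {X : ι → Ω → E} {Y : Ω → E}
    (hX : ∀ i, AEMeasurable (X i) P) (hXY : ∀ᵐ ω ∂P, Tendsto (X · ω) l (𝓝 (Y ω)))
    (f : BoundedContinuousFunction E ℝ) :
    Tendsto (fun i => ∫ ω, f (X i ω) ∂P) l (𝓝 (∫ ω, f (Y ω) ∂P)) :=
  tendsto_integral_filter_of_dominated_convergence (fun _ => ‖f‖)
    (Eventually.of_forall fun i =>
      (f.continuous.measurable.comp_aemeasurable (hX i)).aestronglyMeasurable)
    (Eventually.of_forall fun _ => ae_of_all _ fun _ => f.norm_coe_le_norm _)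
    (integrable_const _)
    (hXY.mono fun _ h => (f.continuous.tendsto _).comp h)

lemma map_const_mul_add_const_mul_eq_gaussianReal {Ω : Type*} [MeasurableSpace Ω]
    {P : Measure Ω} {Z₁ Z₂ : Ω → ℝ} (hZ₁ : HasLaw Z₁ (gaussianReal 0 1) P)
    (hZ₂ : HasLaw Z₂ (gaussianReal 0 1) P) (hind : IndepFun Z₁ Z₂ P) (a b : ℝ) :
    P.map (fun ω => a * Z₁ ω + b * Z₂ ω) = gaussianReal 0 (a ^ 2 + b ^ 2).toNNReal := by
  have h := gaussianReal_add_gaussianReal_of_indepFun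
    (hind.comp (measurable_const_mul a) (measurable_const_mul b))
    (gaussianReal_const_mul hZ₁ a).map_eq (gaussianReal_const_mul hZ₂ b).map_eq
  convert h using 2
  · rfl
  · simp
  · apply NNReal.eq
    simp [Real.coe_toNNReal _ (by positivity : (0 : ℝ) ≤ a ^ 2 + b ^ 2)]

/-- π·(β̂_U − β) converges in distribution to N(0, σ₁² − 2βσ₁₂ + β²σ₂²) as π → ∞. -/
theorem stmt10 {Ω : Type*} [MeasurableSpace Ω] (P : Measure Ω) [IsProbabilityMeasure P]
    (Z₁ Z₂ : Ω → ℝ) (hm₁ : Measurable Z₁) (hm₂ : Measurable Z₂)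
    (hind : IndepFun Z₁ Z₂ P)
    (hZ₁ : P.map Z₁ = gaussianReal 0 1) (hZ₂ : P.map Z₂ = gaussianReal 0 1)
    (β σ₁ σ₁₂ σ₂ : ℝ) (hσ₂ : 0 < σ₂)
    (hpd : σ₁₂ ^ 2 < σ₁ ^ 2 * σ₂ ^ 2)
    (ξ₁ : ℝ → Ω → ℝ) (ξ₂ : ℝ → Ω → ℝ)
    (hξ₂ : ∀ π, ξ₂ π = fun ω => π + σ₂ * Z₂ ω)
    (hξ₁ : ∀ π, ξ₁ π = fun ω => π * β + (σ₁₂ / σ₂) * Z₂ ω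
        + Real.sqrt (σ₁ ^ 2 - σ₁₂ ^ 2 / σ₂ ^ 2) * Z₁ ω) :
    ∀ f : BoundedContinuousFunction ℝ ℝ,
      Tendsto (fun π : ℝ =>
          ∫ ω, f (π * ((millsTau σ₂ (ξ₂ π ω) * (ξ₁ π ω - (σ₁₂ / σ₂ ^ 2) * ξ₂ π ω)
              + σ₁₂ / σ₂ ^ 2) - β)) ∂P)
        atTop
        (nhds (∫ x, f x
          ∂(gaussianReal 0 (σ₁ ^ 2 - 2 * β * σ₁₂ + β ^ 2 * σ₂ ^ 2).toNNReal))) := by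
  intro f
  set s := Real.sqrt (σ₁ ^ 2 - σ₁₂ ^ 2 / σ₂ ^ 2)
  set d := σ₁₂ / σ₂ - β * σ₂ with hd
  have hs : s ^ 2 = σ₁ ^ 2 - σ₁₂ ^ 2 / σ₂ ^ 2 :=
    Real.sq_sqrt (sub_nonneg.2 ((div_le_iff₀ (by positivity)).2 hpd.le))
  have hvar : σ₁ ^ 2 - 2 * β * σ₁₂ + β ^ 2 * σ₂ ^ 2 = s ^ 2 + d ^ 2 := by
    rw [hs, hd]
    field_simp
    ring
  rw [hvar, ← map_const_mul_add_const_mul_eq_gaussianReal ⟨hm₁.aemeasurable, hZ₁⟩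
    ⟨hm₂.aemeasurable, hZ₂⟩ hind s d, integral_map (by fun_prop) (by fun_prop)]
  refine tendsto_integral_comp_of_ae_tendsto (fun π => ?_) (ae_of_all _ fun ω => ?_) f
  · have := (continuous_millsTau σ₂).measurable
    rw [hξ₁, hξ₂]
    fun_prop
  · convert tendsto_mul_millsTau_add hσ₂ (σ₂ * Z₂ ω) (β - σ₁₂ / σ₂ ^ 2) (s * Z₁ ω)
      using 2 with π
    · rw [hξ₁, hξ₂]
      field_simp
      ring
    · rw [hd]
      field_simp
      ring
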